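/- Let σd > 4 and suppose ψ_B(t,r) = L(t)^{-2/σ} B(r/L(t)) e^{iτ(t)} with τ(t) = ∫_0^t L(s)^{-4} ds and L(t) = κ(T_c - t)^p (κ > 0) solves the radial biharmonic NLS iψ_t - Δ_r²ψ + |ψ|^{2σ}ψ = 0 exactly, with B a nonzero C⁴ function. Then the equation forces -B - i(lim_{t→T_c} L_t L³)((2/σ)B + ρB') - Δ_ρ²B + |B|^{2σ}B = 0; since L_tL³ = -pκ⁴(T_c-t)^{4p-1} must have a finite limit, necessarily p ≥ 1/4, and if p = 1/4 then B satisfies -B + i(κ⁴/4)((2/σ)B + ρB') - Δ_ρ²B + |B|^{2σ}B = 0. -/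

import Mathlib

/-!
Substituting the ansatz into the equation at `r = ρ L(t)` turns the BNLS residual into
`L^{-2/σ} e^{iτ} L^{-4}` times the profile residual with coefficient
`-L_t L³ = p κ⁴ (T_c - t)^{4p-1}`, so the profile equation holds for every value this coefficient
takes on `[0, T_c)`. Unless `p = 1/4` it takes two different values, which forces
`(2/σ) B + ρ B' = 0` on `(0, ∞)`; then `ρ^{2/σ} B(ρ)` is constant there and tends to `0` as
`ρ → 0⁺` because `B` is continuous at `0`, so `B` vanishes on `(0, ∞)`. Hence `p = 1/4`, and the
coefficient is `κ⁴/4`.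
-/

open MeasureTheory

/-- The radial biharmonic operator
`Δ_r² = ∂_r⁴ + (2(d-1)/r)∂_r³ + ((d-1)(d-3)/r²)∂_r² - ((d-1)(d-3)/r³)∂_r`. -/
noncomputable def radBilap (d : ℕ) (f : ℝ → ℂ) (r : ℝ) : ℂ :=
  deriv^[4] f r + ((2 * ((d : ℝ) - 1) / r : ℝ) : ℂ) * deriv^[3] f r
    + ((((d : ℝ) - 1) * ((d : ℝ) - 3) / r ^ 2 : ℝ) : ℂ) * deriv^[2] f r
    - ((((d : ℝ) - 1) * ((d : ℝ) - 3) / r ^ 3 : ℝ) : ℂ) * deriv f r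

open Complex Filter Set Topology

theorem iterate_deriv_const_mul_comp_div {n : ℕ} {B : ℝ → ℂ} (hB : ContDiff ℝ n B) (c : ℂ)
    (l r : ℝ) :
    deriv^[n] (fun x => c * B (x / l)) r = c * ((l⁻¹ ^ n : ℝ) : ℂ) * deriv^[n] B (r / l) := by
  simp only [← iteratedDeriv_eq_iterate, div_eq_inv_mul]
  rw [iteratedDeriv_const_mul_field, iteratedDeriv_comp_const_smul hB]
  simp only [real_smul]
  push_cast
  ring

theorem radBilap_const_mul_comp_div (d : ℕ) {B : ℝ → ℂ} (hB : ContDiff ℝ 4 B) (c : ℂ)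
    {l : ℝ} (hl : l ≠ 0) (ρ : ℝ) :
    radBilap d (fun x => c * B (x / l)) (ρ * l) = c * ((l⁻¹ ^ 4 : ℝ) : ℂ) * radBilap d B ρ := by
  have h (k : ℕ) (hk : k ≤ 4) := iterate_deriv_const_mul_comp_div
    (hB.of_le (by exact_mod_cast hk)) c l (ρ * l)
  have h1 := h 1 (by norm_num)
  rw [Function.iterate_one] at h1
  simp only [radBilap, h 4 le_rfl, h 3 (by norm_num), h 2 (by norm_num), h1,
    mul_div_cancel_right₀ ρ hl]
  push_cast
  field_simp

noncomputable def selfSimilar (σ : ℝ) (B : ℝ → ℂ) (L τ : ℝ → ℝ) (t r : ℝ) : ℂ :=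
  ((L t ^ (-(2 / σ)) : ℝ) : ℂ) * B (r / L t) * exp (I * (τ t : ℂ))

noncomputable def bnlsResidual (d : ℕ) (σ : ℝ) (ψ : ℝ → ℝ → ℂ) (t r : ℝ) : ℂ :=
  I * deriv (fun s => ψ s r) t - radBilap d (ψ t) r + ((‖ψ t r‖ ^ (2 * σ) : ℝ) : ℂ) * ψ t r

noncomputable def profileResidual (d : ℕ) (σ c : ℝ) (B : ℝ → ℂ) (ρ : ℝ) : ℂ :=
  -B ρ + I * (c : ℂ) * (((2 / σ : ℝ) : ℂ) * B ρ + (ρ : ℂ) * deriv B ρ)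
    - radBilap d B ρ + ((‖B ρ‖ ^ (2 * σ) : ℝ) : ℂ) * B ρ

section SelfSimilar

variable {σ : ℝ} {B : ℝ → ℂ} {L τ : ℝ → ℝ} {t L' : ℝ}

theorem hasDerivAt_selfSimilar {r : ℝ} (hB : DifferentiableAt ℝ B (r / L t)) (hLt : L t ≠ 0)
    (hL : HasDerivAt L L' t) (hτ : HasDerivAt τ (L t ^ (-(4 : ℝ))) t) :
    HasDerivAt (fun s => selfSimilar σ B L τ s r)
      (((L t ^ (-(2 / σ)) : ℝ) : ℂ) * exp (I * (τ t : ℂ)) * (((L t)⁻¹ ^ 4 : ℝ) : ℂ) *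
        (I * B (r / L t) - ((L' * L t ^ 3 : ℝ) : ℂ) *
          (((2 / σ : ℝ) : ℂ) * B (r / L t) + ((r / L t : ℝ) : ℂ) * deriv B (r / L t)))) t := by
  have hamp := (hL.rpow_const (p := -(2 / σ)) (Or.inl hLt)).ofReal_comp
  have harg : HasDerivAt (fun s => B (r / L s)) ((-(r * L') / L t ^ 2 : ℝ) • deriv B (r / L t)) t :=
    hB.hasDerivAt.scomp t ((hL.inv hLt).const_mul r |>.congr_deriv (by field_simp))
  have hphase := ((hτ.ofReal_comp).const_mul I).cexp
  refine ((hamp.mul harg).mul hphase).congr_deriv ?_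
  rw [Real.rpow_sub_one hLt, Real.rpow_neg_ofNat, zpow_neg, zpow_ofNat, inv_pow]
  simp only [Pi.mul_apply, Complex.real_smul]
  have hLc : ((L t : ℝ) : ℂ) ≠ 0 := ofReal_ne_zero.mpr hLt
  push_cast
  field_simp
  ring

theorem bnlsResidual_selfSimilar (d : ℕ) (hσ : σ ≠ 0) (hB : ContDiff ℝ 4 B) (hLt : 0 < L t)
    (hL : HasDerivAt L L' t) (hτ : HasDerivAt τ (L t ^ (-(4 : ℝ))) t) (ρ : ℝ) :
    bnlsResidual d σ (selfSimilar σ B L τ) t (ρ * L t) =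
      ((L t ^ (-(2 / σ)) : ℝ) : ℂ) * exp (I * (τ t : ℂ)) * (((L t)⁻¹ ^ 4 : ℝ) : ℂ) *
        profileResidual d σ (-(L' * L t ^ 3)) B ρ := by
  have hρ : ρ * L t / L t = ρ := mul_div_cancel_right₀ ρ hLt.ne'
  have hderiv := (hasDerivAt_selfSimilar (σ := σ) (r := ρ * L t)
    (hB.differentiable (by norm_num) _) hLt.ne' hL hτ).deriv
  have hψt : selfSimilar σ B L τ t =
      fun x => ((L t ^ (-(2 / σ)) : ℝ) : ℂ) * exp (I * (τ t : ℂ)) * B (x / L t) := by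
    ext x
    rw [selfSimilar]
    ring
  have hamp : (L t ^ (-(2 / σ))) ^ (2 * σ) = (L t)⁻¹ ^ 4 := by
    rw [← Real.rpow_mul hLt.le, ← Real.rpow_natCast, Real.inv_rpow hLt.le, ← Real.rpow_neg hLt.le]
    congr 1
    field_simp
    norm_num
  have hnorm : ‖((L t ^ (-(2 / σ)) : ℝ) : ℂ) * exp (I * (τ t : ℂ)) * B ρ‖ ^ (2 * σ) =
      (L t)⁻¹ ^ 4 * ‖B ρ‖ ^ (2 * σ) := by
    rw [norm_mul, norm_mul, norm_exp_I_mul_ofReal, mul_one, norm_real, Real.norm_of_nonneg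
      (Real.rpow_nonneg hLt.le _), Real.mul_rpow (Real.rpow_nonneg hLt.le _) (norm_nonneg _), hamp]
  rw [bnlsResidual, hderiv, hψt, radBilap_const_mul_comp_div d hB _ hLt.ne' ρ]
  simp only [hρ]
  rw [hnorm, profileResidual]
  push_cast
  linear_combination (((L t ^ (-(2 / σ)) : ℝ) : ℂ) * exp (I * (τ t : ℂ)) *
    (((L t : ℝ) : ℂ)⁻¹ ^ 4) * B ρ) * I_mul_I

theorem profileResidual_eq_zero_of_bnlsResidual_selfSimilar (d : ℕ) (hσ : σ ≠ 0)
    (hB : ContDiff ℝ 4 B) (hLt : 0 < L t) (hL : HasDerivAt L L' t)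
    (hτ : HasDerivAt τ (L t ^ (-(4 : ℝ))) t) {ρ : ℝ}
    (h : bnlsResidual d σ (selfSimilar σ B L τ) t (ρ * L t) = 0) :
    profileResidual d σ (-(L' * L t ^ 3)) B ρ = 0 := by
  rw [bnlsResidual_selfSimilar d hσ hB hLt hL hτ] at h
  refine (mul_eq_zero.mp h).resolve_left (mul_ne_zero (mul_ne_zero ?_ (exp_ne_zero _)) ?_)
  · exact ofReal_ne_zero.mpr (Real.rpow_pos_of_pos hLt _).ne'
  · exact ofReal_ne_zero.mpr (by positivity)

end SelfSimilar

theorem scaling_eq_zero_of_profileResidual_eq_zero {d : ℕ} {σ c₁ c₂ : ℝ} {B : ℝ → ℂ} {ρ : ℝ}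
    (h₁ : profileResidual d σ c₁ B ρ = 0) (h₂ : profileResidual d σ c₂ B ρ = 0) (hc : c₁ ≠ c₂) :
    ((2 / σ : ℝ) : ℂ) * B ρ + (ρ : ℂ) * deriv B ρ = 0 := by
  have h : (I * ((c₁ : ℂ) - c₂)) * (((2 / σ : ℝ) : ℂ) * B ρ + (ρ : ℂ) * deriv B ρ) = 0 := by
    rw [profileResidual] at h₁ h₂
    linear_combination h₁ - h₂
  refine (mul_eq_zero.mp h).resolve_left (mul_ne_zero I_ne_zero ?_)
  exact sub_ne_zero.mpr (ofReal_injective.ne hc)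

theorem eq_zero_of_mul_add_mul_deriv_eq_zero {α : ℝ} (hα : 0 < α) {B : ℝ → ℂ}
    (hB0 : ContinuousAt B 0) (hB : ∀ x > 0, DifferentiableAt ℝ B x)
    (h : ∀ x > 0, (α : ℂ) * B x + (x : ℂ) * deriv B x = 0) {x : ℝ} (hx : 0 < x) : B x = 0 := by
  set g : ℝ → ℂ := fun y => ((y ^ α : ℝ) : ℂ) * B y
  have hg' (y : ℝ) (hy : 0 < y) : HasDerivAt g 0 y := by
    refine ((Real.hasDerivAt_rpow_const (Or.inl hy.ne')).ofReal_comp.mul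
      (hB y hy).hasDerivAt).congr_deriv ?_
    rw [Real.rpow_sub_one hy.ne']
    have hy' : ((y : ℝ) : ℂ) ≠ 0 := ofReal_ne_zero.mpr hy.ne'
    push_cast
    field_simp
    linear_combination ((y ^ α : ℝ) : ℂ) * h y hy
  have hconst (y : ℝ) (hy : 0 < y) : g y = g x :=
    isOpen_Ioi.is_const_of_deriv_eq_zero isPreconnected_Ioi
      (fun z hz => (hg' z hz).differentiableAt.differentiableWithinAt)
      (fun z hz => (hg' z hz).deriv) hy hx
  have hlim : Tendsto g (𝓝[>] (0 : ℝ)) (𝓝 0) := by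
    have := (Real.continuousAt_rpow_const 0 α (Or.inr hα.le)).ofReal.mul hB0
    simpa [Real.zero_rpow hα.ne'] using this.mono_left nhdsWithin_le_nhds
  have hev : g =ᶠ[𝓝[>] (0 : ℝ)] fun _ => g x := eventually_nhdsWithin_of_forall hconst
  have hgx : g x = 0 := tendsto_nhds_unique (tendsto_const_nhds.congr' hev.symm) hlim
  exact (mul_eq_zero.mp hgx).resolve_left (ofReal_ne_zero.mpr (Real.rpow_pos_of_pos hx α).ne')

theorem hasDerivAt_integral_of_continuousOn_Iio {E : Type*} [NormedAddCommGroup E]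
    [NormedSpace ℝ E] [CompleteSpace E] {f : ℝ → E} {a t T : ℝ} (hf : ContinuousOn f (Iio T))
    (ha : a < T) (ht : t < T) : HasDerivAt (fun u => ∫ s in a..u, f s) (f t) t :=
  intervalIntegral.integral_hasDerivAt_right
    ((hf.mono fun _ hs => lt_of_le_of_lt hs.2 (max_lt ha ht)).intervalIntegrable)
    (hf.stronglyMeasurableAtFilter isOpen_Iio t ht) (hf.continuousAt (Iio_mem_nhds ht))

theorem rpow_ne_half_rpow {x q : ℝ} (hx : 0 < x) (hq : q ≠ 0) : x ^ q ≠ (x / 2) ^ q :=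
  fun h => by linarith [Real.rpow_left_injOn hq hx.le (half_pos hx).le h]

noncomputable def powerLaw (κ p T t : ℝ) : ℝ := κ * (T - t) ^ p

section PowerLaw

variable (κ p T : ℝ) {t : ℝ}

theorem powerLaw_pos (hκ : 0 < κ) (ht : t < T) : 0 < powerLaw κ p T t :=
  mul_pos hκ (Real.rpow_pos_of_pos (sub_pos.mpr ht) p)

theorem hasDerivAt_powerLaw (ht : t < T) :
    HasDerivAt (powerLaw κ p T) (-(κ * p * (T - t) ^ (p - 1))) t := by
  refine (((hasDerivAt_id' t).const_sub T).rpow_const (Or.inl (sub_pos.mpr ht).ne')).const_mul κ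
    |>.congr_deriv ?_
  ring

theorem neg_deriv_mul_powerLaw_pow_three (ht : t < T) :
    -(-(κ * p * (T - t) ^ (p - 1)) * powerLaw κ p T t ^ 3) = p * κ ^ 4 * (T - t) ^ (4 * p - 1) := by
  rw [powerLaw, mul_pow, ← Real.rpow_mul_natCast (sub_pos.mpr ht).le]
  rw [show 4 * p - 1 = (p - 1) + p * (3 : ℕ) by push_cast; ring,
    Real.rpow_add (sub_pos.mpr ht)]
  ring

end PowerLaw

theorem supercritical_selfsimilar_rate_general (d : ℕ) (σ κ p T_c : ℝ)
    (hσ : 0 < σ) (hκ : 0 < κ) (hp : 0 < p) (hT : 0 < T_c)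
    (B : ℝ → ℂ) (hBreg : ContDiff ℝ 4 B) (hB0 : ∃ ρ > (0:ℝ), B ρ ≠ 0)
    (L : ℝ → ℝ) (hL : ∀ t, L t = κ * (T_c - t) ^ p)
    (τ : ℝ → ℝ) (hτ : ∀ t, τ t = ∫ s in (0:ℝ)..t, (L s) ^ (-(4:ℝ)))
    (ψB : ℝ → ℝ → ℂ)
    (hψB : ∀ t r, ψB t r =
      (((L t) ^ (-(2 / σ)) : ℝ) : ℂ) * B (r / L t) * Complex.exp (Complex.I * (τ t : ℂ)))
    (hSol : ∀ t ∈ Set.Ico (0:ℝ) T_c, ∀ r > (0:ℝ),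
      Complex.I * deriv (fun s => ψB s r) t - radBilap d (ψB t) r
        + ((‖ψB t r‖ ^ (2 * σ) : ℝ) : ℂ) * ψB t r = 0) :
    p ≥ 1/4 ∧
    (p = 1/4 ↔ ∀ ρ > (0:ℝ),
      -B ρ + Complex.I * ((κ ^ 4 / 4 : ℝ) : ℂ) *
          (((2 / σ : ℝ) : ℂ) * B ρ + (ρ : ℂ) * deriv B ρ)
        - radBilap d B ρ + ((‖B ρ‖ ^ (2 * σ) : ℝ) : ℂ) * B ρ = 0) := by
  obtain rfl : L = powerLaw κ p T_c := funext hL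
  obtain rfl : ψB = selfSimilar σ B (powerLaw κ p T_c) τ := funext fun t => funext (hψB t)
  have hτ' (t : ℝ) (ht : t < T_c) : HasDerivAt τ (powerLaw κ p T_c t ^ (-(4 : ℝ))) t :=
    funext hτ ▸ hasDerivAt_integral_of_continuousOn_Iio (fun s hs => ((hasDerivAt_powerLaw κ p T_c
      hs).continuousAt.rpow_const (Or.inl (powerLaw_pos κ p T_c hκ hs).ne')).continuousWithinAt)
      hT ht
  have key (t : ℝ) (ht : t ∈ Ico 0 T_c) (ρ : ℝ) (hρ : 0 < ρ) :
      profileResidual d σ (p * κ ^ 4 * (T_c - t) ^ (4 * p - 1)) B ρ = 0 := by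
    have hLt := powerLaw_pos κ p T_c hκ ht.2
    rw [← neg_deriv_mul_powerLaw_pow_three κ p T_c ht.2]
    exact profileResidual_eq_zero_of_bnlsResidual_selfSimilar d hσ.ne' hBreg hLt
      (hasDerivAt_powerLaw κ p T_c ht.2) (hτ' t ht.2) (hSol t ht _ (mul_pos hρ hLt))
  have hquarter : p = 1/4 := by
    by_contra hne
    obtain ⟨ρ₀, hρ₀, hBρ₀⟩ := hB0
    have hc : p * κ ^ 4 * (T_c - 0) ^ (4 * p - 1) ≠ p * κ ^ 4 * (T_c - T_c / 2) ^ (4 * p - 1) := by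
      rw [sub_zero, sub_half, Ne, mul_right_inj' (by positivity)]
      exact rpow_ne_half_rpow hT fun h => hne (by linarith)
    have hscaling (ρ : ℝ) (hρ : 0 < ρ) : ((2 / σ : ℝ) : ℂ) * B ρ + (ρ : ℂ) * deriv B ρ = 0 :=
      scaling_eq_zero_of_profileResidual_eq_zero (key 0 ⟨le_rfl, hT⟩ ρ hρ)
        (key (T_c / 2) ⟨by linarith, by linarith⟩ ρ hρ) hc
    exact hBρ₀ (eq_zero_of_mul_add_mul_deriv_eq_zero (div_pos two_pos hσ)
      hBreg.continuous.continuousAt (fun x _ => hBreg.differentiable (by norm_num) x) hscaling hρ₀)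
  refine ⟨hquarter.ge, iff_of_true hquarter fun ρ hρ => ?_⟩
  have := key 0 ⟨le_rfl, hT⟩ ρ hρ
  rwa [hquarter, sub_zero, show 4 * (1 / 4 : ℝ) - 1 = 0 by norm_num, Real.rpow_zero, mul_one,
    one_div_mul_eq_div] at this

/-- Self-similar blowup rate dichotomy for the supercritical BNLS: if
`ψ_B(t,r) = L^{-2/σ} B(r/L) e^{iτ(t)}` with `L = κ(T_c-t)^p` solves the radial
BNLS exactly, then `p ≥ 1/4`, and `p = 1/4` iff `B` satisfies the nonlinear
eigenvalue problem `-B + i(κ⁴/4)((2/σ)B + ρB') - Δ_ρ²B + |B|^{2σ}B = 0`. -/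
theorem supercritical_selfsimilar_rate (d : ℕ) (σ κ p T_c : ℝ)
    (hσ : 0 < σ) (hsup : 4 < σ * d) (hκ : 0 < κ) (hp : 0 < p) (hT : 0 < T_c)
    (B : ℝ → ℂ) (hBreg : ContDiff ℝ 4 B) (hB0 : ∃ ρ > (0:ℝ), B ρ ≠ 0)
    (L : ℝ → ℝ) (hL : ∀ t, L t = κ * (T_c - t) ^ p)
    (τ : ℝ → ℝ) (hτ : ∀ t, τ t = ∫ s in (0:ℝ)..t, (L s) ^ (-(4:ℝ)))
    (ψB : ℝ → ℝ → ℂ)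
    (hψB : ∀ t r, ψB t r =
      (((L t) ^ (-(2 / σ)) : ℝ) : ℂ) * B (r / L t) * Complex.exp (Complex.I * (τ t : ℂ)))
    (hSol : ∀ t ∈ Set.Ico (0:ℝ) T_c, ∀ r > (0:ℝ),
      Complex.I * deriv (fun s => ψB s r) t - radBilap d (ψB t) r
        + ((‖ψB t r‖ ^ (2 * σ) : ℝ) : ℂ) * ψB t r = 0) :
    p ≥ 1/4 ∧
    (p = 1/4 ↔ ∀ ρ > (0:ℝ),
      -B ρ + Complex.I * ((κ ^ 4 / 4 : ℝ) : ℂ) *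
          (((2 / σ : ℝ) : ℂ) * B ρ + (ρ : ℂ) * deriv B ρ)
        - radBilap d B ρ + ((‖B ρ‖ ^ (2 * σ) : ℝ) : ℂ) * B ρ = 0) :=
  supercritical_selfsimilar_rate_general d σ κ p T_c hσ hκ hp hT B hBreg hB0 L hL τ hτ ψB hψB hSol
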